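/- The group PΓ_0(2) = Γ_0(2)/{±I} is generated by the images of the matrices T = [[1,1],[0,1]] and R = [[1,-1],[2,-1]]. -/

import Mathlib

/-- `SL(2, ℤ)`. -/
abbrev SL2Z := Matrix.SpecialLinearGroup (Fin 2) ℤ

/-- The element `-I` of `SL(2, ℤ)`. -/
def negOne : SL2Z := ⟨!![-1, 0; 0, -1], by norm_num [Matrix.det_fin_two_of]⟩

lemma negOne_mem_center : negOne ∈ Subgroup.center SL2Z := by
  rw [Subgroup.mem_center_iff]
  intro g
  apply Subtype.ext
  show (g : Matrix (Fin 2) (Fin 2) ℤ) * negOne = (negOne : Matrix (Fin 2) (Fin 2) ℤ) * g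
  ext i j
  fin_cases i <;> fin_cases j <;>
    simp [negOne, Matrix.mul_apply, Fin.sum_univ_succ]

instance : (Subgroup.zpowers negOne).Normal := by
  constructor
  intro x hx g
  obtain ⟨k, rfl⟩ := hx
  have hc : Commute g negOne := Subgroup.mem_center_iff.mp negOne_mem_center g
  show g * negOne ^ k * g⁻¹ ∈ Subgroup.zpowers negOne
  have h : g * negOne ^ k * g⁻¹ = negOne ^ k := by
    rw [(hc.zpow_right k).eq, mul_assoc, mul_inv_cancel, mul_one]
  rw [h]
  exact ⟨k, rfl⟩

/-- `PSL(2, ℤ) = SL(2, ℤ)/{±I}`. -/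
abbrev PSL2Z := SL2Z ⧸ Subgroup.zpowers negOne

/-- The matrix `T = [[1, 1], [0, 1]]` as an element of `SL(2, ℤ)`. -/
def Tmat : SL2Z := ⟨!![1, 1; 0, 1], by norm_num [Matrix.det_fin_two_of]⟩

/-- The matrix `R = [[1, -1], [2, -1]]` as an element of `SL(2, ℤ)`. -/
def Rmat : SL2Z := ⟨!![1, -1; 2, -1], by norm_num [Matrix.det_fin_two_of]⟩

/-- `PΓ₀(2) = Γ₀(2)/{±I}`, the image of `Γ₀(2)` in `PSL(2, ℤ)`. -/
def PGamma0Two : Subgroup PSL2Z :=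
  (CongruenceSubgroup.Gamma0 2).map (QuotientGroup.mk' (Subgroup.zpowers negOne))

/-!
Already in `SL(2, ℤ)` the matrices `T` and `R` generate `Γ₀(2)`; the statement follows by
projecting. Since `R * T = L := [[1, 0], [2, 1]]` and `R * R = -I`, the subgroup `⟨T, R⟩` contains
`-I` and all powers of `T` and `L`. Left multiplication by `T ^ q` replaces the entry `a` of
`g = [[a, b], [c, d]]` by `a + q c`, and `L ^ m` replaces `c` by `c + 2 m a`. For `g ∈ Γ₀(2)` the
entry `a` is odd, so a Euclidean step with even quotients on `c` strictly decreases `|c|` without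
leaving `Γ₀(2)`. At `c = 0` we reach `g = ± T ^ b`.
-/

/-- Reduce `a` modulo `c` to `0 ≤ a' < |c|`, odd because `c` is even, then `c` modulo `2a'` into
`[-a', a')`. -/
lemma Int.exists_natAbs_add_two_mul_lt {a c : ℤ} (hc : c ≠ 0) (hc2 : 2 ∣ c) (ha : Odd a) :
    ∃ q m : ℤ, (c + 2 * m * (a + q * c)).natAbs < c.natAbs := by
  set a' := a % c with ha'
  have ha'_eq : a' = a + -(a / c) * c := by rw [ha', Int.emod_def]; ring
  have ha'_nonneg : 0 ≤ a' := Int.emod_nonneg a hc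
  have ha'_lt : a' < c.natAbs := Int.emod_lt a hc
  have ha'_odd : a' % 2 = 1 := by rw [ha', Int.emod_emod_of_dvd a hc2]; exact Int.odd_iff.mp ha
  set c' := (c + a') % (2 * a') - a' with hc'
  have hc'_eq : c' = c + 2 * -((c + a') / (2 * a')) * a' := by rw [hc', Int.emod_def]; ring
  have hc'_lb : -a' ≤ c' := by have := Int.emod_nonneg (c + a') (b := 2 * a') (by omega); omega
  have hc'_ub : c' < a' := by have := Int.emod_lt_of_pos (c + a') (b := 2 * a') (by omega); omega
  refine ⟨-(a / c), -((c + a') / (2 * a')), ?_⟩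
  rw [← ha'_eq, ← hc'_eq]
  omega

open Matrix.SpecialLinearGroup ModularGroup CongruenceSubgroup

namespace Gamma0Two

def Lmat : SL2Z := ⟨!![1, 0; 2, 1], by norm_num [Matrix.det_fin_two_of]⟩

lemma Rmat_mul_Tmat : Rmat * Tmat = Lmat := by decide

lemma Rmat_mul_Rmat : Rmat * Rmat = -1 := by decide

lemma coe_Lmat_zpow (n : ℤ) : ↑(Lmat ^ n) = !![1, 0; 2 * n, 1] := by
  induction n with
  | zero => simp [Matrix.one_fin_two]
  | succ n ih =>
    rw [zpow_add_one, coe_mul, ih]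
    simp [Lmat]
    ring
  | pred n ih =>
    rw [zpow_sub_one, coe_mul, ih, coe_inv, Matrix.adjugate_fin_two]
    simp [Lmat]
    ring

lemma Lmat_zpow_mul_apply_one_zero (n : ℤ) (g : SL2Z) :
    (Lmat ^ n * g) 1 0 = g 1 0 + 2 * n * g 0 0 := by
  simp [coe_Lmat_zpow, Matrix.mul_apply, Fin.sum_univ_two]
  ring

lemma T_zpow_mul_apply_zero_zero (n : ℤ) (g : SL2Z) :
    (T ^ n * g) 0 0 = g 0 0 + n * g 1 0 := by
  simp [coe_T_zpow, Matrix.mul_apply, Fin.sum_univ_two]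

lemma T_zpow_mul_apply_one_zero (n : ℤ) (g : SL2Z) : (T ^ n * g) 1 0 = g 1 0 :=
  congrFun (T_pow_mul_apply_one n g) 0

lemma dvd_apply_one_zero_of_mem_Gamma0 {N : ℕ} {g : SL2Z} (hg : g ∈ Gamma0 N) :
    (N : ℤ) ∣ g 1 0 :=
  (ZMod.intCast_zmod_eq_zero_iff_dvd _ N).mp (Gamma0_mem.mp hg)

lemma odd_apply_zero_zero_of_two_dvd {g : SL2Z} (hc : 2 ∣ g 1 0) : Odd (g 0 0) := by
  obtain ⟨k, hk⟩ := hc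
  have hdet : g 0 0 * g 1 1 - g 0 1 * g 1 0 = 1 := by rw [← Matrix.det_fin_two, g.det_coe]
  have hodd : Odd (g 0 0 * g 1 1) := ⟨g 0 1 * k, by rw [hk] at hdet; linarith⟩
  exact (Int.odd_mul.mp hodd).1

lemma exists_natAbs_apply_one_zero_lt {g : SL2Z} (hg : g ∈ Gamma0 2) (hc : g 1 0 ≠ 0) :
    ∃ q m : ℤ, ((Lmat ^ m * T ^ q * g) 1 0).natAbs < (g 1 0).natAbs := by
  have hc2 : 2 ∣ g 1 0 := dvd_apply_one_zero_of_mem_Gamma0 hg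
  obtain ⟨q, m, hlt⟩ :=
    Int.exists_natAbs_add_two_mul_lt hc hc2 (odd_apply_zero_zero_of_two_dvd hc2)
  refine ⟨q, m, ?_⟩
  rwa [mul_assoc, Lmat_zpow_mul_apply_one_zero, T_zpow_mul_apply_zero_zero,
    T_zpow_mul_apply_one_zero]

lemma eq_T_zpow_or_neg_of_apply_one_zero_eq_zero {g : SL2Z} (hc : g 1 0 = 0) :
    g = T ^ g 0 1 ∨ g = -T ^ (-g 0 1) := by
  have had : g 0 0 * g 1 1 = 1 := by
    have := g.det_coe
    rw [Matrix.det_fin_two, hc] at this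
    linarith
  rcases Int.eq_one_or_neg_one_of_mul_eq_one' had with ⟨ha, hd⟩ | ⟨ha, hd⟩
  · left
    ext i j
    fin_cases i <;> fin_cases j <;> simp [ha, hc, hd, coe_T_zpow]
  · right
    ext i j
    fin_cases i <;> fin_cases j <;> simp [ha, hc, hd, coe_T_zpow]

lemma T_mem_closure : T ∈ Subgroup.closure {Tmat, Rmat} :=
  Subgroup.subset_closure (Set.mem_insert _ _)

lemma Rmat_mem_closure : Rmat ∈ Subgroup.closure {Tmat, Rmat} := Subgroup.subset_closure (by simp)

lemma Lmat_mem_closure : Lmat ∈ Subgroup.closure {Tmat, Rmat} :=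
  Rmat_mul_Tmat ▸ mul_mem Rmat_mem_closure T_mem_closure

lemma neg_mem_closure {g : SL2Z} (hg : g ∈ Subgroup.closure {Tmat, Rmat}) :
    -g ∈ Subgroup.closure {Tmat, Rmat} := by
  rw [neg_eq_neg_one_mul, ← Rmat_mul_Rmat]
  exact mul_mem (mul_mem Rmat_mem_closure Rmat_mem_closure) hg

lemma closure_le_Gamma0_two : Subgroup.closure {Tmat, Rmat} ≤ Gamma0 2 := by
  rw [Subgroup.closure_le]
  rintro g (rfl | rfl) <;> rw [SetLike.mem_coe, Gamma0_mem] <;> decide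

lemma Gamma0_two_le_closure : Gamma0 2 ≤ Subgroup.closure {Tmat, Rmat} := by
  intro g hg
  induction h : (g 1 0).natAbs using Nat.strong_induction_on generalizing g with
  | _ n ih =>
  by_cases hc : g 1 0 = 0
  · rcases eq_T_zpow_or_neg_of_apply_one_zero_eq_zero hc with hT | hT <;> rw [hT]
    · exact zpow_mem T_mem_closure _
    · exact neg_mem_closure (zpow_mem T_mem_closure _)
  obtain ⟨q, m, hlt⟩ := exists_natAbs_apply_one_zero_lt hg hc
  have hLT : Lmat ^ m * T ^ q ∈ Subgroup.closure {Tmat, Rmat} :=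
    mul_mem (zpow_mem Lmat_mem_closure m) (zpow_mem T_mem_closure q)
  have hg' : Lmat ^ m * T ^ q * g ∈ Subgroup.closure {Tmat, Rmat} :=
    ih _ (h ▸ hlt) (mul_mem (closure_le_Gamma0_two hLT) hg) rfl
  simpa only [inv_mul_cancel_left] using mul_mem (inv_mem hLT) hg'

lemma closure_Tmat_Rmat_eq_Gamma0_two : Subgroup.closure {Tmat, Rmat} = Gamma0 2 :=
  le_antisymm closure_le_Gamma0_two Gamma0_two_le_closure

end Gamma0Two

/-- `PΓ₀(2)` is generated by the images of `T = [[1,1],[0,1]]` and `R = [[1,-1],[2,-1]]`. -/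
theorem PGamma0_generated :
    Subgroup.closure {(QuotientGroup.mk Tmat : PSL2Z), (QuotientGroup.mk Rmat : PSL2Z)}
      = PGamma0Two := by
  rw [PGamma0Two, ← Gamma0Two.closure_Tmat_Rmat_eq_Gamma0_two, MonoidHom.map_closure,
    Set.image_pair]
  rfl
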